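/- arXiv:2504.10232 — 3 statements merged into one kernel-verified Lean document; each statement's English description precedes it below -/
import Mathlib

section
/- If the degree of every TA is one (each TA positively values exactly one course), then a merit-based envy-free feasible matching for the whole instance exists if and only if for each course x_j, the sub-instance consisting of x_j and its neighboring TAs admits a merit-based envy-free feasible matching, and in that case the union of the per-course solutions is a solution to the whole instance. -/
open Finset
open scoped Classical

/-- Utility of a TA for an optional assignment (`0` for being unassigned). -/
def uOpt {T X : Type*} (u : T → X → ℕ) (t : T) : Option X → ℕ
  | some x => u t x
  | none => 0

/-- A matching is feasible: assigned TAs positively value their course, and each course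
`x` receives exactly `c x` TAs. -/
def Feasible {T X : Type*} [Fintype T] (u : T → X → ℕ) (c : X → ℕ)
    (μ : T → Option X) : Prop :=
  (∀ t x, μ t = some x → 0 < u t x) ∧
  (∀ x, (Finset.univ.filter fun t => μ t = some x).card = c x)

/-- Merit-based envy-freeness: no TA `t` envies a TA `t'` matched to a course `x`,
i.e. has grade in `x` at least that of `t'` while valuing `x` more than its own
assignment. -/
def MEF {T X : Type*} (u : T → X → ℕ) (g : T → X → ℚ) (μ : T → Option X) : Prop :=
  ¬ ∃ t t' x, μ t' = some x ∧ g t' x ≤ g t x ∧ uOpt u t (μ t) < u t x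

/-- A merit-based envy-free feasible solution of the single-course sub-instance of
course `x`: a set `S` of TAs positively valuing `x`, of size `c x`, such that no
positively-valuing TA outside `S` has grade at least that of a member of `S`. -/
def SubSol {T X : Type*} (u : T → X → ℕ) (g : T → X → ℚ) (c : X → ℕ)
    (x : X) (S : Finset T) : Prop :=
  (∀ t ∈ S, 0 < u t x) ∧ S.card = c x ∧
  (∀ t, 0 < u t x → t ∉ S → ∀ t' ∈ S, g t x < g t' x)

lemma assemble {T X : Type*} [Fintype T] [Fintype X]
    (u : T → X → ℕ) (g : T → X → ℚ) (c : X → ℕ)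
    (hdeg : ∀ t, ∃! x, 0 < u t x)
    (S : X → Finset T) (hS : ∀ x, SubSol u g c x (S x))
    (μ : T → Option X) (hμ : ∀ t x, μ t = some x ↔ t ∈ S x) :
    Feasible u c μ ∧ MEF u g μ := by
  constructor
  · constructor
    · intro t x h
      exact (hS x).1 t ((hμ t x).1 h)
    · intro x
      have : (Finset.univ.filter fun t => μ t = some x) = S x := by
        ext t; simp [hμ t x]
      rw [this]; exact (hS x).2.1
  · rintro ⟨t, t', x, ht', hg, hlt⟩
    have hux : 0 < u t x := lt_of_le_of_lt (Nat.zero_le _) hlt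
    by_cases hmem : t ∈ S x
    · have : μ t = some x := (hμ t x).2 hmem
      rw [this] at hlt
      exact lt_irrefl _ hlt
    · exact absurd hg (not_le.2 ((hS x).2.2 t hux hmem t' ((hμ t' x).1 ht')))

/-- When every TA positively values exactly one course, a merit-based envy-free
feasible matching of the whole instance exists iff every single-course sub-instance has
a merit-based envy-free feasible solution; moreover any matching assembled from
per-course solutions is a solution of the whole instance. -/
theorem degree_one_decomposition
    {T X : Type*} [Fintype T] [Fintype X]
    (u : T → X → ℕ) (g : T → X → ℚ) (c : X → ℕ)
    (hdeg : ∀ t, ∃! x, 0 < u t x) :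
    ((∃ μ : T → Option X, Feasible u c μ ∧ MEF u g μ) ↔ ∀ x, ∃ S, SubSol u g c x S) ∧
    (∀ S : X → Finset T, (∀ x, SubSol u g c x (S x)) →
      ∀ μ : T → Option X, (∀ t x, μ t = some x ↔ t ∈ S x) →
        Feasible u c μ ∧ MEF u g μ) := by
  refine ⟨⟨?_, ?_⟩, fun S hS μ hμ => assemble u g c hdeg S hS μ hμ⟩
  · rintro ⟨μ, ⟨hfeas1, hfeas2⟩, hmef⟩ x
    refine ⟨Finset.univ.filter fun t => μ t = some x, ?_, hfeas2 x, ?_⟩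
    · intro t ht
      exact hfeas1 t x (by simpa using ht)
    · intro t hux ht t' ht'
      simp only [mem_filter, mem_univ, true_and] at ht ht'
      by_contra hle
      push_neg at hle
      apply hmef
      refine ⟨t, t', x, ht', hle, ?_⟩
      have hμt : μ t = none := by
        cases h : μ t with
        | none => rfl
        | some y =>
          have hy : 0 < u t y := hfeas1 t y h
          obtain ⟨z, _, hz⟩ := hdeg t
          have : y = x := (hz y hy).trans (hz x hux).symm
          exact absurd (this ▸ h) ht
      rw [hμt]
      exact hux
  · intro hall
    choose S hS using hall
    set xt := fun t => (hdeg t).choose with hxt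
    have hxt1 : ∀ t, 0 < u t (xt t) := fun t => (hdeg t).choose_spec.1
    have hxt2 : ∀ t x, 0 < u t x → x = xt t := fun t x h => (hdeg t).choose_spec.2 x h
    refine ⟨fun t => if t ∈ S (xt t) then some (xt t) else none, ?_⟩
    apply assemble u g c hdeg S hS
    intro t x
    constructor
    · intro h
      split_ifs at h with hm
      exact (Option.some.inj h) ▸ hm
    · intro hm
      have : x = xt t := hxt2 t x ((hS x).1 t hm)
      subst this
      simp [hm]
end

section
/- The converse of the preceding statement fails: there exists an instance (one course with capacity 1 and two TAs with identical grades in the course, both valuing the course positively) that admits a weakly stable matching but no merit-based envy-free feasible matching. -/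
/-- The converse of "merit-based envy-free implies weakly stable" fails: there is an
instance with one course of capacity 1 and two TAs with equal grades, both positively
valuing the course, that admits a weakly stable feasible matching but no merit-based
envy-free feasible matching.  (Feasibility: exactly one TA is assigned; weak stability:
no unassigned TA with strictly higher grade than the assigned one; merit-based
envy-freeness: no unassigned TA with positive utility and grade at least that of the
assigned one.) -/
theorem weakly_stable_not_mef_counterexample :
    ∃ (g u : Bool → ℚ),
      (∀ t, 0 < u t) ∧ g true = g false ∧
      (∃ μ : Bool → Option Unit,
        (∃! t, μ t = some ()) ∧
        ¬ ∃ t t', μ t = none ∧ μ t' = some () ∧ g t' < g t) ∧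
      ¬ ∃ μ : Bool → Option Unit,
        (∃! t, μ t = some ()) ∧
        ¬ ∃ t t', μ t = none ∧ μ t' = some () ∧ g t' ≤ g t ∧ 0 < u t := by
  refine ⟨fun _ => 0, fun _ => 1, fun t => one_pos, rfl,
    ⟨fun t => if t then some () else none, ⟨true, rfl, ?_⟩, ?_⟩, ?_⟩
  · intro t ht
    cases t <;> simp_all
  · rintro ⟨t, t', h1, h2, h3⟩
    exact absurd h3 (lt_irrefl 0)
  · rintro ⟨μ, ⟨t, ht, huniq⟩, hno⟩
    refine hno ⟨!t, t, ?_, ht, le_refl 0, one_pos⟩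
    cases h : μ (!t)
    · rfl
    · have := huniq (!t) (by cases ‹Unit›; exact h)
      simp at this
end

section
/- Equal-Cardinality Partition reduces to MEFE-Matching with two courses: a multiset S = {s₁,…,s_m} of positive integers (m even) can be partitioned into two subsets of equal size m/2 and equal sum if and only if the instance with two courses x₁, x₂ each of capacity m/2, course valuations v_i(t_j) = s_j, all TA utilities and grades equal to 1, and threshold k satisfying k·(m/2) = (Σ_{s∈S} s)/2 admits a feasible matching in which both courses have average utility at least k and no merit-based envy exists. -/
open Finset
open scoped Classical

/-- Equal-Cardinality Partition reduces to MEFE-Matching with two courses: a multiset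
`s₁, …, s_m` of positive integers (`m` even) can be split into two parts of equal size
`m/2` and equal sum iff the instance with two courses of capacity `m/2`, course
valuations `v_i(t_j) = s_j`, all TA utilities and grades equal to `1`, and threshold `k`
with `k · (m/2) = (∑ s)/2`, admits a feasible matching in which each course's average
utility is at least `k` and no merit-based envy exists (with constant utilities/grades,
the envy condition compares the constant grade 1 and the utility 1 of a matched course
against the utility, `1` or `0`, of one's own assignment). -/
theorem equal_cardinality_partition_iff_mefe
    (m : ℕ) (hm : 2 ∣ m) (hmpos : 0 < m)
    (s : Fin m → ℕ) (hs : ∀ i, 0 < s i)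
    (k : ℚ) (hk : k * ((m : ℚ) / 2) * 2 = ∑ i, (s i : ℚ)) :
    (∃ A : Finset (Fin m), A.card = m / 2 ∧ ∑ i ∈ A, s i = ∑ i ∈ Aᶜ, s i) ↔
    (∃ μ : Fin m → Option (Fin 2),
      (∀ j : Fin 2, (Finset.univ.filter fun i => μ i = some j).card = m / 2) ∧
      (∀ j : Fin 2,
        k * ((m : ℚ) / 2) ≤ ∑ i ∈ Finset.univ.filter (fun i => μ i = some j), (s i : ℚ)) ∧
      ¬ ∃ (t t' : Fin m) (x : Fin 2), μ t' = some x ∧ (1 : ℚ) ≤ 1 ∧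
        (match μ t with | some _ => (1 : ℚ) | none => 0) < 1) := by
  constructor
  · rintro ⟨A, hcard, hsum⟩
    refine ⟨fun i => if i ∈ A then some 0 else some 1, ?_, ?_, ?_⟩
    · intro j
      fin_cases j
      · have hA : (univ.filter fun i => (if i ∈ A then some (0 : Fin 2) else some 1) = some 0)
            = A := by
          ext i; by_cases h : i ∈ A <;> simp [h]
        show (univ.filter fun i => (if i ∈ A then some (0 : Fin 2) else some 1) = some 0).card
            = m / 2
        rw [hA, hcard]
      · have hB : (univ.filter fun i => (if i ∈ A then some (0 : Fin 2) else some 1) = some 1)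
            = Aᶜ := by
          ext i; by_cases h : i ∈ A <;> simp [h]
        show (univ.filter fun i => (if i ∈ A then some (0 : Fin 2) else some 1) = some 1).card
            = m / 2
        rw [hB, card_compl, hcard]
        simp only [Fintype.card_fin]
        omega
    · have htot : (∑ i ∈ A, (s i : ℚ)) + ∑ i ∈ Aᶜ, (s i : ℚ) = ∑ i, (s i : ℚ) :=
        Finset.sum_add_sum_compl A _
      have hq : (∑ i ∈ A, (s i : ℚ)) = ∑ i ∈ Aᶜ, (s i : ℚ) := by
        exact_mod_cast congrArg (Nat.cast : ℕ → ℚ) hsum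
      intro j
      fin_cases j
      · have hA : (univ.filter fun i => (if i ∈ A then some (0 : Fin 2) else some 1) = some 0)
            = A := by
          ext i; by_cases h : i ∈ A <;> simp [h]
        show k * ((m : ℚ) / 2) ≤ ∑ i ∈ univ.filter
            (fun i => (if i ∈ A then some (0 : Fin 2) else some 1) = some 0), (s i : ℚ)
        rw [hA]; linarith
      · have hB : (univ.filter fun i => (if i ∈ A then some (0 : Fin 2) else some 1) = some 1)
            = Aᶜ := by
          ext i; by_cases h : i ∈ A <;> simp [h]
        show k * ((m : ℚ) / 2) ≤ ∑ i ∈ univ.filter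
            (fun i => (if i ∈ A then some (0 : Fin 2) else some 1) = some 1), (s i : ℚ)
        rw [hB]; linarith
    · rintro ⟨t, t', x, -, -, hlt⟩
      by_cases h : t ∈ A <;> simp [h] at hlt
  · rintro ⟨μ, hcard, hge, -⟩
    set A := univ.filter (fun i => μ i = some 0) with hAdef
    set B := univ.filter (fun i => μ i = some 1) with hBdef
    have hdisj : Disjoint A B := by
      rw [Finset.disjoint_left]
      intro i hi hi'
      simp [hAdef, hBdef] at hi hi'
      rw [hi] at hi'
      exact absurd (Option.some.inj hi') (by decide)
    have hcards : A.card + B.card = m := by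
      have h0 := hcard 0
      have h1 := hcard 1
      rw [← hAdef] at h0; rw [← hBdef] at h1
      omega
    have hunion : A ∪ B = univ := by
      apply Finset.eq_univ_of_card
      rw [Finset.card_union_of_disjoint hdisj, hcards, Fintype.card_fin]
    have hBc : B = Aᶜ := by
      apply Finset.eq_of_subset_of_card_le
      · intro i hi
        rw [Finset.mem_compl]
        exact fun hiA => (Finset.disjoint_right.mp hdisj hi) hiA
      · rw [Finset.card_compl, Fintype.card_fin]; omega
    have htot : (∑ i ∈ A, (s i : ℚ)) + ∑ i ∈ B, (s i : ℚ) = ∑ i, (s i : ℚ) := by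
      rw [hBc]; exact Finset.sum_add_sum_compl A _
    have hgeA := hge 0
    have hgeB := hge 1
    rw [← hAdef] at hgeA; rw [← hBdef] at hgeB
    have heq : (∑ i ∈ A, (s i : ℚ)) = ∑ i ∈ B, (s i : ℚ) := by linarith
    refine ⟨A, hcard 0, ?_⟩
    have : (∑ i ∈ A, (s i : ℚ)) = ∑ i ∈ Aᶜ, (s i : ℚ) := by rw [← hBc]; exact heq
    exact_mod_cast this
end
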